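/- arXiv:2503.05079 — 5 statements merged into one kernel-verified Lean document; each statement's English description precedes it below -/
import Mathlib

section
/- Let Y be a finite nonempty type, π_ref a strictly positive PMF on Y, r : Y → ℝ a reward function, and β > 0. Set Z = Σ_y π_ref(y)·exp(r(y)/β) and π*(y) = π_ref(y)·exp(r(y)/β)/Z. Then π* is a strictly positive PMF, and for every strictly positive PMF π on Y, Σ_y π(y)·r(y) − β·KL(π ‖ π_ref) ≤ β·log Z, with equality if and only if π = π*. -/
/-!
For every PMF `π` the objective equals `β·log Z − β·KL(π ‖ π*)`, since
`log π*(y) = log π_ref(y) + r(y)/β − log Z` and `π` has total mass one. Gibbs' inequality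
`KL(π ‖ π*) ≥ 0`, with equality only at `π = π*`, then gives both the bound and its equality case.
-/

/-- KL divergence between two PMFs (given as real-valued functions) on a finite type. -/
noncomputable def KL {Y : Type*} [Fintype Y] (p q : Y → ℝ) : ℝ :=
  ∑ y, p y * Real.log (p y / q y)

open InformationTheory

lemma mul_log_div_sub_sub_eq_mul_klFun {p q : ℝ} (hq : q ≠ 0) :
    p * Real.log (p / q) - (p - q) = q * klFun (p / q) := by
  rw [klFun_apply]
  field_simp
  ring

lemma sub_le_mul_log_div {p q : ℝ} (hp : 0 ≤ p) (hq : 0 < q) : p - q ≤ p * Real.log (p / q) := by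
  rw [← sub_nonneg, mul_log_div_sub_sub_eq_mul_klFun hq.ne']
  exact mul_nonneg hq.le (klFun_nonneg (div_nonneg hp hq.le))

lemma mul_log_div_eq_sub_iff {p q : ℝ} (hp : 0 ≤ p) (hq : 0 < q) :
    p * Real.log (p / q) = p - q ↔ p = q := by
  rw [← sub_eq_zero, mul_log_div_sub_sub_eq_mul_klFun hq.ne', mul_eq_zero,
    klFun_eq_zero_iff (div_nonneg hp hq.le), div_eq_one_iff_eq hq.ne']
  simp [hq.ne']

section Gibbs

variable {Y : Type*} [Fintype Y] {p q : Y → ℝ}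

lemma sum_sub_le_KL (hp : ∀ y, 0 ≤ p y) (hq : ∀ y, 0 < q y) : ∑ y, (p y - q y) ≤ KL p q :=
  Finset.sum_le_sum fun y _ => sub_le_mul_log_div (hp y) (hq y)

lemma KL_eq_sum_sub_iff (hp : ∀ y, 0 ≤ p y) (hq : ∀ y, 0 < q y) :
    KL p q = ∑ y, (p y - q y) ↔ p = q := by
  have hdefect_nonneg : ∀ y ∈ Finset.univ, 0 ≤ p y * Real.log (p y / q y) - (p y - q y) :=
    fun y _ => sub_nonneg.mpr (sub_le_mul_log_div (hp y) (hq y))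
  rw [← sub_eq_zero, KL, ← Finset.sum_sub_distrib,
    Finset.sum_eq_zero_iff_of_nonneg hdefect_nonneg, funext_iff]
  simp only [Finset.mem_univ, true_implies, sub_eq_zero]
  exact forall_congr' fun y => mul_log_div_eq_sub_iff (hp y) (hq y)

lemma KL_nonneg (hp : ∀ y, 0 ≤ p y) (hq : ∀ y, 0 < q y) (hsum : ∑ y, p y = ∑ y, q y) :
    0 ≤ KL p q := by
  simpa [Finset.sum_sub_distrib, hsum] using sum_sub_le_KL hp hq

lemma KL_eq_zero_iff (hp : ∀ y, 0 ≤ p y) (hq : ∀ y, 0 < q y) (hsum : ∑ y, p y = ∑ y, q y) :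
    KL p q = 0 ↔ p = q := by
  simpa [Finset.sum_sub_distrib, hsum] using KL_eq_sum_sub_iff hp hq

end Gibbs

lemma sum_mul_sub_mul_KL_eq_mul_log_sub_mul_KL {Y : Type*} [Fintype Y]
    {πref r π πs : Y → ℝ} {β Z : ℝ} (href : ∀ y, πref y ≠ 0) (hβ : β ≠ 0) (hZ : Z ≠ 0)
    (hπs : ∀ y, πs y = πref y * Real.exp (r y / β) / Z) (hπ : ∑ y, π y = 1) :
    (∑ y, π y * r y) - β * KL π πref = β * Real.log Z - β * KL π πs := by
  have hlog_term : ∀ y, π y * Real.log (π y / πs y)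
      = π y * Real.log (π y / πref y) - π y * r y / β + π y * Real.log Z := by
    intro y
    rcases eq_or_ne (π y) 0 with h0 | h0
    · simp [h0]
    have hlog_πs : Real.log (πs y) = Real.log (πref y) + r y / β - Real.log Z := by
      rw [hπs y, Real.log_div (mul_ne_zero (href y) (Real.exp_pos _).ne') hZ,
        Real.log_mul (href y) (Real.exp_pos _).ne', Real.log_exp]
    rw [Real.log_div h0 (hπs y ▸ div_ne_zero (mul_ne_zero (href y) (Real.exp_pos _).ne') hZ),
      Real.log_div h0 (href y), hlog_πs]
    ring
  simp only [KL, hlog_term, Finset.sum_add_distrib, Finset.sum_sub_distrib, ← Finset.sum_div,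
    ← Finset.sum_mul, hπ]
  field_simp
  ring

theorem rlhf_closed_form_optimum_general {Y : Type*} [Fintype Y] [Nonempty Y]
    (πref : Y → ℝ) (href_pos : ∀ y, 0 < πref y)
    (r : Y → ℝ) (β : ℝ) (hβ : 0 < β)
    (Z : ℝ) (hZ : Z = ∑ y, πref y * Real.exp (r y / β))
    (πs : Y → ℝ) (hπs : ∀ y, πs y = πref y * Real.exp (r y / β) / Z) :
    (∀ y, 0 < πs y) ∧ (∑ y, πs y = 1) ∧
    (∀ π : Y → ℝ, (∀ y, 0 < π y) → (∑ y, π y = 1) →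
      (∑ y, π y * r y) - β * KL π πref ≤ β * Real.log Z ∧
      ((∑ y, π y * r y) - β * KL π πref = β * Real.log Z ↔ π = πs)) := by
  have hweight_pos : ∀ y, 0 < πref y * Real.exp (r y / β) :=
    fun y => mul_pos (href_pos y) (Real.exp_pos _)
  have hZ_pos : 0 < Z := hZ ▸ Finset.sum_pos (fun y _ => hweight_pos y) Finset.univ_nonempty
  have hπs_pos : ∀ y, 0 < πs y := fun y => hπs y ▸ div_pos (hweight_pos y) hZ_pos
  have hπs_sum : ∑ y, πs y = 1 := by
    simp only [hπs, ← Finset.sum_div, ← hZ, div_self hZ_pos.ne']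
  refine ⟨hπs_pos, hπs_sum, fun π hπ_pos hπ_sum => ?_⟩
  rw [sum_mul_sub_mul_KL_eq_mul_log_sub_mul_KL (fun y => (href_pos y).ne') hβ.ne' hZ_pos.ne'
    hπs hπ_sum]
  have hsum : ∑ y, π y = ∑ y, πs y := hπ_sum.trans hπs_sum.symm
  have hKL_nonneg := KL_nonneg (fun y => (hπ_pos y).le) hπs_pos hsum
  refine ⟨sub_le_self _ (mul_nonneg hβ.le hKL_nonneg), ?_⟩
  rw [← KL_eq_zero_iff (fun y => (hπ_pos y).le) hπs_pos hsum, sub_eq_self, mul_eq_zero]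
  simp [hβ.ne']

/-- The closed-form solution of the KL-regularized RLHF objective: with
`Z = ∑_y π_ref(y)·exp(r(y)/β)` and `π*(y) = π_ref(y)·exp(r(y)/β)/Z`, the policy `π*` is a
strictly positive PMF, and for every strictly positive PMF `π`,
`∑_y π(y)·r(y) − β·KL(π ‖ π_ref) ≤ β·log Z`, with equality iff `π = π*`. -/
theorem rlhf_closed_form_optimum {Y : Type*} [Fintype Y] [Nonempty Y]
    (πref : Y → ℝ) (href_pos : ∀ y, 0 < πref y) (href_sum : ∑ y, πref y = 1)
    (r : Y → ℝ) (β : ℝ) (hβ : 0 < β)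
    (Z : ℝ) (hZ : Z = ∑ y, πref y * Real.exp (r y / β))
    (πs : Y → ℝ) (hπs : ∀ y, πs y = πref y * Real.exp (r y / β) / Z) :
    (∀ y, 0 < πs y) ∧ (∑ y, πs y = 1) ∧
    (∀ π : Y → ℝ, (∀ y, 0 < π y) → (∑ y, π y = 1) →
      (∑ y, π y * r y) - β * KL π πref ≤ β * Real.log Z ∧
      ((∑ y, π y * r y) - β * KL π πref = β * Real.log Z ↔ π = πs)) :=
  rlhf_closed_form_optimum_general πref href_pos r β hβ Z hZ πs hπs
end

section
/- Let Y be a finite nonempty type, π_ref a strictly positive PMF on Y, r : Y → ℝ, and β > 0. Set Z = Σ_y π_ref(y)·exp(r(y)/β) and π*(y) = π_ref(y)·exp(r(y)/β)/Z. Then for every strictly positive PMF π on Y, β·KL(π ‖ π*) = β·KL(π ‖ π_ref) − Σ_y π(y)·r(y) + β·log Z. In particular, minimizing the reverse-KL distillation objective KL(π ‖ π*) over π is equivalent (up to the additive constant β·log Z) to maximizing the KL-regularized RLHF objective E_π[r] − β·KL(π ‖ π_ref). -/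
/-!
Since `log (π / π*) = log (π / π_ref) - r / β + log Z` pointwise, taking the `π`-expectation
turns `KL(π ‖ π*)` into `KL(π ‖ π_ref) - E_π[r] / β + log Z`; multiplying by `β` gives the identity.
-/

lemma mul_log_div_mul_exp_div (a b c Z : ℝ) (hb : b ≠ 0) (hZ : Z ≠ 0) :
    a * Real.log (a / (b * Real.exp c / Z)) = a * Real.log (a / b) - a * c + a * Real.log Z := by
  rcases eq_or_ne a 0 with rfl | ha
  · simp
  have hsplit : a / (b * Real.exp c / Z) = a / b / Real.exp c * Z := by
    field_simp
  rw [hsplit, Real.log_mul (by positivity) hZ, Real.log_div (by positivity) (Real.exp_ne_zero c),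
    Real.log_exp]
  ring

lemma KL_mul_exp_div {Y : Type*} [Fintype Y] (p q f : Y → ℝ) (Z : ℝ)
    (hq : ∀ y, q y ≠ 0) (hZ : Z ≠ 0) :
    KL p (fun y => q y * Real.exp (f y) / Z) =
      KL p q - ∑ y, p y * f y + (∑ y, p y) * Real.log Z := by
  simp only [KL, mul_log_div_mul_exp_div _ _ _ _ (hq _) hZ, Finset.sum_add_distrib,
    Finset.sum_sub_distrib, Finset.sum_mul]

theorem reverse_kl_distillation_identity_general {Y : Type*} [Fintype Y] [Nonempty Y]
    (πref : Y → ℝ) (href_pos : ∀ y, 0 < πref y)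
    (r : Y → ℝ) (β : ℝ) (hβ : 0 < β)
    (Z : ℝ) (hZ : Z = ∑ y, πref y * Real.exp (r y / β))
    (πs : Y → ℝ) (hπs : ∀ y, πs y = πref y * Real.exp (r y / β) / Z)
    (π : Y → ℝ) (hπ_sum : ∑ y, π y = 1) :
    β * KL π πs = β * KL π πref - (∑ y, π y * r y) + β * Real.log Z := by
  have hZ_pos : 0 < Z := hZ ▸
    Finset.sum_pos (fun y _ => mul_pos (href_pos y) (Real.exp_pos _)) Finset.univ_nonempty
  have hπs_eq : πs = fun y => πref y * Real.exp (r y / β) / Z := funext hπs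
  have hreward : β * ∑ y, π y * (r y / β) = ∑ y, π y * r y := by
    rw [Finset.mul_sum]
    exact Finset.sum_congr rfl fun y _ => by field_simp
  rw [hπs_eq, KL_mul_exp_div π πref _ Z (fun y => (href_pos y).ne') hZ_pos.ne', hπ_sum,
    ← hreward]
  ring

/-- Reverse-KL distillation identity: with `Z = ∑_y π_ref(y)·exp(r(y)/β)` and
`π*(y) = π_ref(y)·exp(r(y)/β)/Z`, for every strictly positive PMF `π`,
`β·KL(π ‖ π*) = β·KL(π ‖ π_ref) − ∑_y π(y)·r(y) + β·log Z`. -/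
theorem reverse_kl_distillation_identity {Y : Type*} [Fintype Y] [Nonempty Y]
    (πref : Y → ℝ) (href_pos : ∀ y, 0 < πref y) (href_sum : ∑ y, πref y = 1)
    (r : Y → ℝ) (β : ℝ) (hβ : 0 < β)
    (Z : ℝ) (hZ : Z = ∑ y, πref y * Real.exp (r y / β))
    (πs : Y → ℝ) (hπs : ∀ y, πs y = πref y * Real.exp (r y / β) / Z)
    (π : Y → ℝ) (hπ_pos : ∀ y, 0 < π y) (hπ_sum : ∑ y, π y = 1) :
    β * KL π πs = β * KL π πref - (∑ y, π y * r y) + β * Real.log Z :=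
  reverse_kl_distillation_identity_general πref href_pos r β hβ Z hZ πs hπs π hπ_sum
end

section
/- Let Y be a finite type, y_w, y_l ∈ Y with y_w ≠ y_l, and r : Y → ℝ. If π_ref is the PMF assigning mass 1/2 to each of y_w and y_l (and 0 elsewhere), then −r(y_w) + log(Σ_y π_ref(y)·exp(r(y))) = −log(σ(r(y_w) − r(y_l))) − log 2, where σ(x) = 1/(1 + exp(−x)). -/
/-! The reference measure puts mass `1/2` on `y_w` and `y_l` only, so the partition function is
`(exp r(y_w) + exp r(y_l)) / 2`. Since `σ(a - b) = exp a / (exp a + exp b)`, the term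
`−log σ(r(y_w) − r(y_l))` is exactly `log (exp r(y_w) + exp r(y_l)) − r(y_w)`, and the factor `1/2`
contributes the constant `−log 2`. -/

noncomputable def sigmoid (x : ℝ) : ℝ := 1 / (1 + Real.exp (-x))

open Real hiding sigmoid

theorem Finset.sum_ite_or_eq_mul {Y R : Type*} [Fintype Y] [DecidableEq Y] [NonAssocSemiring R]
    {a b : Y} (hab : a ≠ b) (c : R) (f : Y → R) :
    ∑ y, (if y = a ∨ y = b then c else 0) * f y = c * (f a + f b) := by
  have hpair : (univ.filter fun y => y = a ∨ y = b) = {a, b} := by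
    ext y
    simp
  simp_rw [ite_mul, zero_mul]
  rw [← Finset.sum_filter, hpair, Finset.sum_pair hab, mul_add]

theorem sigmoid_sub_eq_exp_div (a b : ℝ) : sigmoid (a - b) = exp a / (exp a + exp b) := by
  rw [sigmoid, neg_sub, exp_sub]
  field_simp

theorem neg_log_sigmoid_sub (a b : ℝ) : -log (sigmoid (a - b)) = log (exp a + exp b) - a := by
  rw [sigmoid_sub_eq_exp_div,
    log_div (exp_ne_zero a) (add_pos (exp_pos a) (exp_pos b)).ne', log_exp]
  ring

/-- With `π_ref` the PMF assigning mass `1/2` to each of two distinct points `y_w ≠ y_l`,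
`−r(y_w) + log(∑_y π_ref(y)·exp(r(y))) = −log σ(r(y_w) − r(y_l)) − log 2`. -/
theorem two_point_ebm_loss_eq_bt_loss {Y : Type*} [Fintype Y] [DecidableEq Y]
    (yw yl : Y) (hne : yw ≠ yl) (r : Y → ℝ)
    (πref : Y → ℝ)
    (hπref : ∀ y, πref y = if y = yw ∨ y = yl then (1 : ℝ) / 2 else 0) :
    -r yw + Real.log (∑ y, πref y * Real.exp (r y)) =
      -Real.log (sigmoid (r yw - r yl)) - Real.log 2 := by
  simp only [hπref]
  rw [Finset.sum_ite_or_eq_mul hne, neg_log_sigmoid_sub,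
    log_mul (by norm_num) (add_pos (exp_pos _) (exp_pos _)).ne', one_div, log_inv]
  ring
end

section
/- Let Y be a finite nonempty type, π_ref a strictly positive PMF on Y, π_chosen a PMF on Y, r*(y) = π_chosen(y)/π_ref(y), and r_φ : Y → ℝ with r_φ(y) > 0 for all y. With h(r) = r·log r − (1 + r)·log(1 + r), the Bregman density-ratio divergence satisfies D_h(r* ‖ r_φ) = Σ_y π_ref(y)·h(r*(y)) + Σ_y π_ref(y)·log(1 + r_φ(y)) − Σ_y π_chosen(y)·log(r_φ(y)/(1 + r_φ(y))). In particular, minimizing D_h(r* ‖ r_φ) over r_φ is equivalent, up to a constant independent of r_φ, to minimizing the BCE loss E_{π_ref}[log(1 + r_φ)] − E_{π_chosen}[log(r_φ/(1 + r_φ))]. -/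
/-! The tangent of `h(r) = r log r − (1 + r) log(1 + r)` at `r > 0` has intercept
`h(r) − h′(r)·r = −log(1 + r)`, and `π_ref·r* = π_chosen`. Expanding the Bregman divergence
term by term, its `r_φ`-dependent part is therefore `π_ref·log(1 + r_φ) − π_chosen·h′(r_φ)`. -/

open Finset Real

theorem sum_mul_bregman_eq {ι : Type*} (s : Finset ι) (p a b d : ι → ℝ) (f : ℝ → ℝ) :
    ∑ i ∈ s, p i * (f (a i) - f (b i) - d i * (a i - b i)) =
      ∑ i ∈ s, p i * f (a i) + ∑ i ∈ s, p i * (d i * b i - f (b i)) -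
        ∑ i ∈ s, p i * a i * d i := by
  rw [← sum_add_distrib, ← sum_sub_distrib]
  exact sum_congr rfl fun i _ => by ring

theorem log_div_one_add_mul_sub_bce {r : ℝ} (hr : 0 < r) :
    log (r / (1 + r)) * r - (r * log r - (1 + r) * log (1 + r)) = log (1 + r) := by
  rw [log_div hr.ne' (by linarith)]
  ring

theorem bregman_bce_general {Y : Type*} [Fintype Y]
    (πref : Y → ℝ) (href_pos : ∀ y, 0 < πref y)
    (πc : Y → ℝ)
    (rs : Y → ℝ) (hrs : ∀ y, rs y = πc y / πref y)
    (rφ : Y → ℝ) (hrφ_pos : ∀ y, 0 < rφ y)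
    (h : ℝ → ℝ) (hh : ∀ r, h r = r * Real.log r - (1 + r) * Real.log (1 + r))
    (D : ℝ)
    (hD : D = ∑ y, πref y *
        (h (rs y) - h (rφ y) - Real.log (rφ y / (1 + rφ y)) * (rs y - rφ y))) :
    D = (∑ y, πref y * h (rs y)) + (∑ y, πref y * Real.log (1 + rφ y)) -
        ∑ y, πc y * Real.log (rφ y / (1 + rφ y)) := by
  have hπc : ∀ y, πref y * rs y = πc y := fun y => by
    rw [hrs, mul_div_cancel₀ _ (href_pos y).ne']
  have hintercept : ∀ y, log (rφ y / (1 + rφ y)) * rφ y - h (rφ y) = log (1 + rφ y) :=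
    fun y => by rw [hh]; exact log_div_one_add_mul_sub_bce (hrφ_pos y)
  rw [hD, sum_mul_bregman_eq]
  simp only [hπc, hintercept]

/-- The BCE instance of the Bregman density-ratio divergence: with
`h(r) = r·log r − (1+r)·log(1+r)` (so `h′(r) = log(r/(1+r))` on `(0,∞)`) and
`r*(y) = π_chosen(y)/π_ref(y)`,
`D_h(r* ‖ r_φ) = ∑_y π_ref(y)·h(r*(y)) + ∑_y π_ref(y)·log(1 + r_φ(y))
               − ∑_y π_chosen(y)·log(r_φ(y)/(1 + r_φ(y)))`. -/
theorem bregman_bce {Y : Type*} [Fintype Y] [Nonempty Y]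
    (πref : Y → ℝ) (href_pos : ∀ y, 0 < πref y) (href_sum : ∑ y, πref y = 1)
    (πc : Y → ℝ) (hπc_nonneg : ∀ y, 0 ≤ πc y) (hπc_sum : ∑ y, πc y = 1)
    (rs : Y → ℝ) (hrs : ∀ y, rs y = πc y / πref y)
    (rφ : Y → ℝ) (hrφ_pos : ∀ y, 0 < rφ y)
    (h : ℝ → ℝ) (hh : ∀ r, h r = r * Real.log r - (1 + r) * Real.log (1 + r))
    (D : ℝ)
    (hD : D = ∑ y, πref y *
        (h (rs y) - h (rφ y) - Real.log (rφ y / (1 + rφ y)) * (rs y - rφ y))) :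
    D = (∑ y, πref y * h (rs y)) + (∑ y, πref y * Real.log (1 + rφ y)) -
        ∑ y, πc y * Real.log (rφ y / (1 + rφ y)) :=
  bregman_bce_general πref href_pos πc rs hrs rφ hrφ_pos h hh D hD
end

section
/- Let Y be a finite nonempty type, let p and q be strictly positive PMFs on Y, and let β > 0. Define f*(y) = β·log(p(y)/q(y)) and, for f : Y → ℝ, the CPC loss L(f) = Σ_{w ∈ Y} Σ_{l ∈ Y} p(w)·q(l)·(−log σ((f(w) − f(l))/β)), where σ(x) = 1/(1 + exp(−x)). Then L(f) ≥ L(f*) for every f : Y → ℝ; i.e., the scaled log density ratio f* minimizes the one-negative-sample contrastive predictive coding loss over all critics. -/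
/-!
Swapping the roles of `w` and `l` pairs the term of `(w, l)` with that of `(l, w)`. With
`a = p w q l`, `b = p l q w` and `t = (f w - f l) / β`, the pair contributes
`a (-log σ t) + b (-log σ (-t))`, a binary cross entropy between `(a, b) / (a + b)` and
`(σ t, 1 - σ t)`. By Gibbs' inequality it is smallest when `σ t = a / (a + b)`, i.e. at
`t = log (a / b)`, which is exactly the value of `(f* w - f* l) / β`.
-/

lemma sigmoid_eq_real_sigmoid : sigmoid = Real.sigmoid :=
  funext fun _ => one_div _

namespace Real

lemma sigmoid_log_div {a b : ℝ} (ha : 0 < a) (hb : 0 < b) :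
    sigmoid (log (a / b)) = a / (a + b) := by
  rw [sigmoid_def, ← log_inv, exp_log (by positivity), inv_div]
  field_simp

lemma mul_log_div_le_sub {a x : ℝ} (ha : 0 < a) (hx : 0 < x) : a * log (x / a) ≤ x - a := by
  calc a * log (x / a) ≤ a * (x / a - 1) :=
        mul_le_mul_of_nonneg_left (log_le_sub_one_of_pos (by positivity)) ha.le
    _ = x - a := by field_simp

lemma mul_log_add_mul_log_one_sub_le {a b s : ℝ} (ha : 0 < a) (hb : 0 < b) (hs₀ : 0 < s)
    (hs₁ : s < 1) :
    a * log s + b * log (1 - s) ≤ a * log (a / (a + b)) + b * log (b / (a + b)) := by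
  have hab : 0 < a + b := by positivity
  have hs' : 0 < 1 - s := by linarith
  have h₁ := mul_log_div_le_sub ha (mul_pos hs₀ hab)
  have h₂ := mul_log_div_le_sub hb (mul_pos hs' hab)
  rw [log_div (by positivity) ha.ne', log_mul hs₀.ne' hab.ne'] at h₁
  rw [log_div (by positivity) hb.ne', log_mul hs'.ne' hab.ne'] at h₂
  rw [log_div ha.ne' hab.ne', log_div hb.ne' hab.ne']
  linarith

lemma logistic_loss_le {a b : ℝ} (ha : 0 < a) (hb : 0 < b) (t : ℝ) :
    a * -log (sigmoid (log (a / b))) + b * -log (sigmoid (-log (a / b)))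
      ≤ a * -log (sigmoid t) + b * -log (sigmoid (-t)) := by
  have hab : 0 < a + b := by positivity
  have hneg : sigmoid (-log (a / b)) = b / (a + b) := by
    rw [sigmoid_neg, sigmoid_log_div ha hb]
    field_simp
    ring
  rw [sigmoid_log_div ha hb, hneg, sigmoid_neg]
  linarith [mul_log_add_mul_log_one_sub_le ha hb (sigmoid_pos t) (sigmoid_lt_one t)]

lemma log_div_sub_log_div {a b c d : ℝ} (ha : 0 < a) (hb : 0 < b) (hc : 0 < c) (hd : 0 < d) :
    log (a / b) - log (c / d) = log (a * d / (c * b)) := by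
  rw [← log_div (by positivity) (by positivity)]
  congr 1
  field_simp

end Real

lemma Finset.sum_sum_le_of_add_swap_le {ι M : Type*} [AddCommGroup M] [LinearOrder M]
    [IsOrderedAddMonoid M] (s : Finset ι) {S T : ι → ι → M}
    (h : ∀ i j, S i j + S j i ≤ T i j + T j i) :
    ∑ i ∈ s, ∑ j ∈ s, S i j ≤ ∑ i ∈ s, ∑ j ∈ s, T i j := by
  have hswap : ∀ U : ι → ι → M,
      ∑ i ∈ s, ∑ j ∈ s, (U i j + U j i) = 2 • ∑ i ∈ s, ∑ j ∈ s, U i j := fun U => by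
    simp only [Finset.sum_add_distrib]
    rw [Finset.sum_comm (f := fun i j => U j i), two_nsmul]
  have hle := Finset.sum_le_sum fun i (_ : i ∈ s) =>
    Finset.sum_le_sum fun j (_ : j ∈ s) => h i j
  rw [hswap, hswap] at hle
  exact (nsmul_le_nsmul_iff_right two_ne_zero).mp hle

theorem cpc_optimal_critic_general {Y : Type*} [Fintype Y]
    (p q : Y → ℝ)
    (hp_pos : ∀ y, 0 < p y)
    (hq_pos : ∀ y, 0 < q y)
    (β : ℝ) (hβ : 0 < β)
    (fs : Y → ℝ) (hfs : ∀ y, fs y = β * Real.log (p y / q y))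
    (L : (Y → ℝ) → ℝ)
    (hL : ∀ f, L f = ∑ w, ∑ l, p w * q l * (-Real.log (sigmoid ((f w - f l) / β)))) :
    ∀ f : Y → ℝ, L fs ≤ L f := by
  intro f
  rw [hL, hL]
  refine Finset.sum_sum_le_of_add_swap_le _ fun w l => ?_
  have hfs_diff : (fs w - fs l) / β = Real.log (p w * q l / (p l * q w)) := by
    rw [hfs, hfs, ← mul_sub, mul_div_cancel_left₀ _ hβ.ne',
      Real.log_div_sub_log_div (hp_pos w) (hq_pos w) (hp_pos l) (hq_pos l)]
  have hswap : ∀ g : Y → ℝ, (g l - g w) / β = -((g w - g l) / β) := fun g => by ring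
  rw [hswap, hswap, hfs_diff, sigmoid_eq_real_sigmoid]
  exact Real.logistic_loss_le (mul_pos (hp_pos w) (hq_pos l)) (mul_pos (hp_pos l) (hq_pos w)) _

/-- The scaled log density ratio `f*(y) = β·log(p(y)/q(y))` minimizes the
one-negative-sample CPC/InfoNCE loss
`L(f) = ∑_w ∑_l p(w)·q(l)·(−log σ((f(w) − f(l))/β))` over all critics `f`. -/
theorem cpc_optimal_critic {Y : Type*} [Fintype Y] [Nonempty Y]
    (p q : Y → ℝ)
    (hp_pos : ∀ y, 0 < p y) (hp_sum : ∑ y, p y = 1)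
    (hq_pos : ∀ y, 0 < q y) (hq_sum : ∑ y, q y = 1)
    (β : ℝ) (hβ : 0 < β)
    (fs : Y → ℝ) (hfs : ∀ y, fs y = β * Real.log (p y / q y))
    (L : (Y → ℝ) → ℝ)
    (hL : ∀ f, L f = ∑ w, ∑ l, p w * q l * (-Real.log (sigmoid ((f w - f l) / β)))) :
    ∀ f : Y → ℝ, L fs ≤ L f :=
  cpc_optimal_critic_general p q hp_pos hq_pos β hβ fs hfs L hL
end
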